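/- arXiv:1401.3891 — 4 statements merged into one kernel-verified Lean document; each statement's English description precedes it below -/
import Mathlib

section
/- Carleman's principle (comparison form). Let d ≥ 2, let G ⊆ G' be bounded open subsets of ℝ^d, and let A ⊆ ∂G ∩ ∂G' be a subset of their common boundary. Let u be continuous on the closure of G and twice continuously differentiable with vanishing Laplacian on G, with u ≤ 1 on A and u = 0 on ∂G \ A. Let v be continuous on the closure of G' and twice continuously differentiable with vanishing Laplacian on G', with v ≥ 0 on the closure of G' and v = 1 on A. Then u ≤ v everywhere on G. (Interpreting u(x) = ω_G(x, A) and v(x) = ω_{G'}(x, A) as harmonic measures, this states that the harmonic measure of a boundary portion A increases when the region is enlarged by modifying the complementary part of the boundary: ω_G(x, A) ≤ ω_{G'}(x, A).) -/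
/-!
For `ε > 0` the function `w = u - v + ε ‖x‖²` has Laplacian `2 ε d > 0` on `G`, whereas at an
interior local maximum every second directional derivative, hence the Laplacian, is `≤ 0`. So
`w` attains its maximum over the compact set `closure G` on `∂G`. There `u ≤ v` (on `A`,
`u ≤ 1 = v`; off `A`, `u = 0 ≤ v`), so `u - v ≤ ε R²` on `G` when `G ⊆ closedBall 0 R`;
let `ε → 0`.
-/

open Filter Topology InnerProductSpace Laplacian

theorem IsLocalMax.deriv_deriv_nonpos {g : ℝ → ℝ} {t : ℝ} (h : IsLocalMax g t)
    (hc : ContinuousAt g t) : deriv (deriv g) t ≤ 0 := by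
  by_contra! hpos
  have hmin := isLocalMin_of_deriv_deriv_pos hpos h.deriv_eq_zero hc
  have hconst : g =ᶠ[𝓝 t] fun _ => g t := by
    filter_upwards [h, hmin] with s hs₁ hs₂ using le_antisymm hs₁ hs₂
  have hderiv : deriv g =ᶠ[𝓝 t] fun _ => 0 := by
    simpa using hconst.deriv
  simp [hderiv.deriv_eq] at hpos

section

variable {E F : Type*} [NormedAddCommGroup E] [NormedSpace ℝ E] [NormedAddCommGroup F]
  [NormedSpace ℝ F]

theorem ContDiffAt.differentiableAt_fderiv {f : E → F} {x : E} (hf : ContDiffAt ℝ 2 f x) :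
    DifferentiableAt ℝ (fderiv ℝ f) x :=
  (hf.fderiv_right (m := 1) (by norm_num)).differentiableAt one_ne_zero

theorem fderiv_fderiv_apply_eq_iteratedFDeriv {f : E → F} {x : E}
    (hf : ContDiffAt ℝ 2 f x) (v w : E) :
    fderiv ℝ (fun y => fderiv ℝ f y v) x w = iteratedFDeriv ℝ 2 f x ![w, v] := by
  rw [fderiv_clm_apply hf.differentiableAt_fderiv (differentiableAt_const v),
    iteratedFDeriv_two_apply]
  simp

theorem IsLocalMax.iteratedFDeriv_two_nonpos {f : E → ℝ} {x : E} (h : IsLocalMax f x)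
    (hf : ContDiffAt ℝ 2 f x) (v : E) : iteratedFDeriv ℝ 2 f x ![v, v] ≤ 0 := by
  set L : ℝ → E := fun t => x + t • v
  have hL : ∀ t, HasDerivAt L v t := fun t => by
    simpa [L] using ((hasDerivAt_id t).smul_const v).const_add x
  have hL0 : L 0 = x := by simp [L]
  have hLc : Tendsto L (𝓝 0) (𝓝 x) := hL0 ▸ (hL 0).continuousAt.tendsto
  have hline : deriv (f ∘ L) =ᶠ[𝓝 0] fun t => fderiv ℝ f (L t) v := by
    filter_upwards [hLc.eventually (hf.eventually (by norm_num))] with t ht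
    exact ((ht.differentiableAt two_ne_zero).hasFDerivAt.comp_hasDerivAt t (hL t)).deriv
  have hsecond : deriv (deriv (f ∘ L)) 0 = iteratedFDeriv ℝ 2 f x ![v, v] := by
    rw [hline.deriv_eq, ← fderiv_fderiv_apply_eq_iteratedFDeriv hf]
    have hd : DifferentiableAt ℝ (fun y => fderiv ℝ f y v) (L 0) :=
      hL0 ▸ hf.differentiableAt_fderiv.clm_apply (differentiableAt_const v)
    exact (hd.hasFDerivAt.comp_hasDerivAt 0 (hL 0)).deriv.trans (by rw [hL0])
  have hmax : IsLocalMax (f ∘ L) 0 := (hL0 ▸ h : IsLocalMax f (L 0)).comp_tendsto (hL0 ▸ hLc)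
  rw [← hsecond]
  exact hmax.deriv_deriv_nonpos (hf.continuousAt.comp_of_eq (hL 0).continuousAt hL0)

end

theorem exists_mem_frontier_le_of_forall_not_isLocalMax {X : Type*} [PseudoMetricSpace X]
    [ProperSpace X] {K : Set X} {f : X → ℝ} (hK : IsOpen K) (hKb : Bornology.IsBounded K)
    (hf : ContinuousOn f (closure K)) (hno : ∀ y ∈ K, ¬ IsLocalMax f y) {x : X} (hx : x ∈ K) :
    ∃ y ∈ frontier K, f x ≤ f y := by
  obtain ⟨y, hy, hmax⟩ := hKb.isCompact_closure.exists_isMaxOn ⟨x, subset_closure hx⟩ hf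
  have hyK : y ∉ K := fun hyK =>
    hno y hyK <| Filter.mem_of_superset (hK.mem_nhds hyK) fun z hz => hmax (subset_closure hz)
  exact ⟨y, by rw [hK.frontier_eq]; exact ⟨hy, hyK⟩, hmax (subset_closure hx)⟩

section

variable {E : Type*} [NormedAddCommGroup E] [InnerProductSpace ℝ E] [FiniteDimensional ℝ E]

theorem IsLocalMax.laplacian_nonpos {f : E → ℝ} {x : E} (h : IsLocalMax f x)
    (hf : ContDiffAt ℝ 2 f x) : Δ f x ≤ 0 := by
  rw [laplacian_eq_iteratedFDeriv_stdOrthonormalBasis]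
  exact Finset.sum_nonpos fun i _ => h.iteratedFDeriv_two_nonpos hf _

theorem laplacian_norm_sq (x : E) :
    Δ (fun y : E => ‖y‖ ^ 2) x = 2 * Module.finrank ℝ E := by
  have h2 (v : E) : fderiv ℝ (fderiv ℝ fun y : E => ‖y‖ ^ 2) x v v = 2 * ‖v‖ ^ 2 := by
    rw [fderiv_norm_sq, ← FunLike.coe_smul, ContinuousLinearMap.fderiv]
    simp only [smul_apply, nsmul_eq_mul, Nat.cast_ofNat]
    exact congrArg (2 * ·) (real_inner_self_eq_norm_sq v)
  simp [laplacian_eq_iteratedFDeriv_stdOrthonormalBasis, iteratedFDeriv_two_apply, h2, mul_comm]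

theorem ContDiffAt.laplacian_add_smul_norm_sq {f : E → ℝ} {x : E} (hf : ContDiffAt ℝ 2 f x)
    (ε : ℝ) : Δ (f + ε • fun y : E => ‖y‖ ^ 2) x = Δ f x + ε * (2 * Module.finrank ℝ E) := by
  have hq : ContDiff ℝ 2 fun y : E => ‖y‖ ^ 2 := contDiff_norm_sq ℝ
  have hεq : ContDiff ℝ 2 (ε • fun y : E => ‖y‖ ^ 2) := hq.const_smul ε
  rw [hf.laplacian_add hεq.contDiffAt, laplacian_smul ε hq.contDiffAt,
    laplacian_norm_sq, smul_eq_mul]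

theorem exists_mem_frontier_le_of_laplacian_pos {K : Set E} {f : E → ℝ} (hK : IsOpen K)
    (hKb : Bornology.IsBounded K) (hfc : ContinuousOn f (closure K)) (hfs : ContDiffOn ℝ 2 f K)
    (hΔ : ∀ y ∈ K, 0 < Δ f y) {x : E} (hx : x ∈ K) :
    ∃ y ∈ frontier K, f x ≤ f y :=
  exists_mem_frontier_le_of_forall_not_isLocalMax hK hKb hfc (fun y hy hmax =>
    (hΔ y hy).not_ge (hmax.laplacian_nonpos (hfs.contDiffAt (hK.mem_nhds hy)))) hx

theorem le_of_forall_mem_frontier_le_of_laplacian_nonneg [Nontrivial E] {K : Set E}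
    {f : E → ℝ} (hK : IsOpen K) (hKb : Bornology.IsBounded K) (hfc : ContinuousOn f (closure K))
    (hfs : ContDiffOn ℝ 2 f K) (hΔ : ∀ y ∈ K, 0 ≤ Δ f y) {c : ℝ}
    (hc : ∀ y ∈ frontier K, f y ≤ c) {x : E} (hx : x ∈ K) : f x ≤ c := by
  obtain ⟨R, hR⟩ := hKb.closure.subset_closedBall 0
  have hperturbed (ε : ℝ) (hε : 0 < ε) : f x ≤ c + ε * R ^ 2 := by
    set g : E → ℝ := f + ε • fun y => ‖y‖ ^ 2
    have hgΔ : ∀ y ∈ K, 0 < Δ g y := fun y hy => by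
      rw [(hfs.contDiffAt (hK.mem_nhds hy)).laplacian_add_smul_norm_sq]
      have := hΔ y hy
      have : (0 : ℝ) < Module.finrank ℝ E := by exact_mod_cast Module.finrank_pos
      positivity
    have hgc : ContinuousOn g (closure K) :=
      hfc.add (continuous_const.smul (continuous_norm.pow 2)).continuousOn
    obtain ⟨y, hy, hxy⟩ := exists_mem_frontier_le_of_laplacian_pos hK hKb hgc
      (hfs.add ((contDiff_norm_sq ℝ).const_smul ε).contDiffOn) hgΔ hx
    have hyR : ‖y‖ ≤ R := by simpa using hR (frontier_subset_closure hy)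
    calc f x
      _ ≤ g x := by
        simp only [g, Pi.add_apply, Pi.smul_apply, smul_eq_mul, le_add_iff_nonneg_right]
        positivity
      _ ≤ g y := hxy
      _ ≤ c + ε * R ^ 2 := by
        simp only [g, Pi.add_apply, Pi.smul_apply, smul_eq_mul]
        gcongr
        exact hc y hy
  have hlim : Tendsto (fun ε : ℝ => c + ε * R ^ 2) (𝓝[>] 0) (𝓝 c) := by
    have : Continuous (fun ε : ℝ => c + ε * R ^ 2) := by fun_prop
    simpa using (this.tendsto 0).mono_left nhdsWithin_le_nhds
  exact ge_of_tendsto hlim (eventually_nhdsWithin_of_forall hperturbed)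

end

theorem EuclideanSpace.laplacian_eq_sum_fderiv_fderiv_single {ι F : Type*} [Fintype ι]
    [DecidableEq ι] [NormedAddCommGroup F] [NormedSpace ℝ F] {f : EuclideanSpace ℝ ι → F}
    {x : EuclideanSpace ℝ ι} (hf : ContDiffAt ℝ 2 f x) :
    Δ f x = ∑ i, fderiv ℝ (fun y => fderiv ℝ f y (EuclideanSpace.single i 1)) x
      (EuclideanSpace.single i 1) := by
  simp [laplacian_eq_iteratedFDeriv_orthonormalBasis f (EuclideanSpace.basisFun ι ℝ),
    fderiv_fderiv_apply_eq_iteratedFDeriv hf]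

theorem carleman_principle_general
    (d : ℕ) (hd : 2 ≤ d)
    (G G' : Set (EuclideanSpace ℝ (Fin d)))
    (hG : IsOpen G)
    (hGbdd : Bornology.IsBounded G)
    (hGG' : G ⊆ G')
    (A : Set (EuclideanSpace ℝ (Fin d)))
    (u v : EuclideanSpace ℝ (Fin d) → ℝ)
    (hu_cont : ContinuousOn u (closure G))
    (hu_smooth : ContDiffOn ℝ 2 u G)
    (hu_harm : ∀ x ∈ G, ∑ i : Fin d,
      fderiv ℝ (fun y => fderiv ℝ u y (EuclideanSpace.single i 1)) x
        (EuclideanSpace.single i 1) = 0)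
    (hu_le : ∀ x ∈ A, u x ≤ 1)
    (hu_zero : ∀ x ∈ frontier G \ A, u x = 0)
    (hv_cont : ContinuousOn v (closure G'))
    (hv_smooth : ContDiffOn ℝ 2 v G')
    (hv_harm : ∀ x ∈ G', ∑ i : Fin d,
      fderiv ℝ (fun y => fderiv ℝ v y (EuclideanSpace.single i 1)) x
        (EuclideanSpace.single i 1) = 0)
    (hv_nonneg : ∀ x ∈ closure G', 0 ≤ v x)
    (hv_one : ∀ x ∈ A, v x = 1) :
    ∀ x ∈ G, u x ≤ v x := by
  have : Nontrivial (EuclideanSpace ℝ (Fin d)) := by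
    have : Nonempty (Fin d) := ⟨⟨0, by omega⟩⟩
    infer_instance
  have hclosure : closure G ⊆ closure G' := closure_mono hGG'
  have hu_at : ∀ y ∈ G, ContDiffAt ℝ 2 u y := fun y hy => hu_smooth.contDiffAt (hG.mem_nhds hy)
  have hv_at : ∀ y ∈ G, ContDiffAt ℝ 2 v y := fun y hy =>
    hv_smooth.contDiffAt (mem_of_superset (hG.mem_nhds hy) hGG')
  have hΔ : ∀ y ∈ G, 0 ≤ Δ (u - v) y := fun y hy => by
    rw [(hu_at y hy).laplacian_sub (hv_at y hy),
      EuclideanSpace.laplacian_eq_sum_fderiv_fderiv_single (hu_at y hy),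
      EuclideanSpace.laplacian_eq_sum_fderiv_fderiv_single (hv_at y hy),
      hu_harm y hy, hv_harm y (hGG' hy), sub_zero]
  have hfrontier : ∀ y ∈ frontier G, (u - v) y ≤ 0 := fun y hy => by
    by_cases hyA : y ∈ A
    · simpa [hv_one y hyA] using hu_le y hyA
    · simpa [hu_zero y ⟨hy, hyA⟩] using hv_nonneg y (hclosure (frontier_subset_closure hy))
  intro x hx
  simpa [sub_nonpos] using le_of_forall_mem_frontier_le_of_laplacian_nonneg hG hGbdd
    (hu_cont.sub (hv_cont.mono hclosure)) (hu_smooth.sub (hv_smooth.mono hGG')) hΔ hfrontier hx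

/-- **Carleman's principle (comparison form).**
Let `G ⊆ G'` be bounded open subsets of `ℝ^d` (`d ≥ 2`) and `A` a subset of their
common boundary. If `u` is continuous on `closure G`, harmonic (`C²` with vanishing
Laplacian) on `G`, with `u ≤ 1` on `A` and `u = 0` on `∂G \ A`, and `v` is continuous
on `closure G'`, harmonic on `G'`, nonnegative on `closure G'` and equal to `1` on `A`,
then `u ≤ v` on `G`. Interpreting `u = ω_G(·, A)` and `v = ω_{G'}(·, A)` as harmonic
measures, the harmonic measure of `A` increases when the domain is enlarged. -/
theorem carleman_principle
    (d : ℕ) (hd : 2 ≤ d)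
    (G G' : Set (EuclideanSpace ℝ (Fin d)))
    (hG : IsOpen G) (hG' : IsOpen G')
    (hGbdd : Bornology.IsBounded G) (hG'bdd : Bornology.IsBounded G')
    (hGG' : G ⊆ G')
    (A : Set (EuclideanSpace ℝ (Fin d))) (hA : A ⊆ frontier G ∩ frontier G')
    (u v : EuclideanSpace ℝ (Fin d) → ℝ)
    (hu_cont : ContinuousOn u (closure G))
    (hu_smooth : ContDiffOn ℝ 2 u G)
    (hu_harm : ∀ x ∈ G, ∑ i : Fin d,
      fderiv ℝ (fun y => fderiv ℝ u y (EuclideanSpace.single i 1)) x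
        (EuclideanSpace.single i 1) = 0)
    (hu_le : ∀ x ∈ A, u x ≤ 1)
    (hu_zero : ∀ x ∈ frontier G \ A, u x = 0)
    (hv_cont : ContinuousOn v (closure G'))
    (hv_smooth : ContDiffOn ℝ 2 v G')
    (hv_harm : ∀ x ∈ G', ∑ i : Fin d,
      fderiv ℝ (fun y => fderiv ℝ v y (EuclideanSpace.single i 1)) x
        (EuclideanSpace.single i 1) = 0)
    (hv_nonneg : ∀ x ∈ closure G', 0 ≤ v x)
    (hv_one : ∀ x ∈ A, v x = 1) :
    ∀ x ∈ G, u x ≤ v x :=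
  carleman_principle_general d hd G G' hG hGbdd hGG' A u v hu_cont hu_smooth hu_harm hu_le hu_zero
    hv_cont hv_smooth hv_harm hv_nonneg hv_one
end

section
/- Let L ≥ 0, let v_0, …, v_L and w_0, …, w_L be positive real numbers, and let ε > 0. Then for every choice of positive real numbers M_0, …, M_L satisfying the constraint ∑_{ℓ=0}^L v_ℓ/M_ℓ ≤ ε², the total work satisfies ∑_{ℓ=0}^L M_ℓ·w_ℓ ≥ ε^{−2} · (∑_{ℓ=0}^L √(v_ℓ·w_ℓ))². -/
/-! Cauchy–Schwarz applied to `√(v ℓ w ℓ) = √(v ℓ / M ℓ) · √(M ℓ w ℓ)` bounds `(∑ ℓ, √(v ℓ w ℓ))²` by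
the sampling error `∑ ℓ, v ℓ / M ℓ ≤ ε²` times the work `∑ ℓ, M ℓ w ℓ`. -/

open Finset

theorem sq_sum_sqrt_mul_le_sum_div_mul_sum_mul {ι : Type*} (s : Finset ι) (v w M : ι → ℝ)
    (hv : ∀ i ∈ s, 0 ≤ v i) (hw : ∀ i ∈ s, 0 ≤ w i) (hM : ∀ i ∈ s, 0 < M i) :
    (∑ i ∈ s, √(v i * w i)) ^ 2 ≤ (∑ i ∈ s, v i / M i) * ∑ i ∈ s, M i * w i := by
  refine sum_sq_le_sum_mul_sum_of_sq_le_mul s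
    (fun i hi => div_nonneg (hv i hi) (hM i hi).le)
    (fun i hi => mul_nonneg (hM i hi).le (hw i hi)) (fun i hi => le_of_eq ?_)
  rw [Real.sq_sqrt (mul_nonneg (hv i hi) (hw i hi))]
  field_simp [(hM i hi).ne']

/-- **Lower bound for the multilevel Monte Carlo work.**
For positive level variances `v ℓ`, costs per sample `w ℓ` and sample numbers `M ℓ`
subject to the sampling-error constraint `∑ ℓ, v ℓ / M ℓ ≤ ε²`, the total work
satisfies `∑ ℓ, M ℓ · w ℓ ≥ ε⁻² · (∑ ℓ, √(v ℓ · w ℓ))²`. -/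
theorem mlmc_work_lower_bound
    (L : ℕ) (v w : Fin (L + 1) → ℝ)
    (hv : ∀ ℓ, 0 < v ℓ) (hw : ∀ ℓ, 0 < w ℓ)
    (ε : ℝ) (hε : 0 < ε)
    (M : Fin (L + 1) → ℝ) (hM : ∀ ℓ, 0 < M ℓ)
    (hconstraint : ∑ ℓ, v ℓ / M ℓ ≤ ε ^ 2) :
    ε⁻¹ ^ 2 * (∑ ℓ, Real.sqrt (v ℓ * w ℓ)) ^ 2 ≤ ∑ ℓ, M ℓ * w ℓ := by
  have hwork : 0 ≤ ∑ ℓ, M ℓ * w ℓ := sum_nonneg fun ℓ _ => (mul_pos (hM ℓ) (hw ℓ)).le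
  have hsq : (∑ ℓ, √(v ℓ * w ℓ)) ^ 2 ≤ ε ^ 2 * ∑ ℓ, M ℓ * w ℓ :=
    calc (∑ ℓ, √(v ℓ * w ℓ)) ^ 2
        ≤ (∑ ℓ, v ℓ / M ℓ) * ∑ ℓ, M ℓ * w ℓ :=
          sq_sum_sqrt_mul_le_sum_div_mul_sum_mul _ v w M (fun ℓ _ => (hv ℓ).le)
            (fun ℓ _ => (hw ℓ).le) (fun ℓ _ => hM ℓ)
      _ ≤ ε ^ 2 * ∑ ℓ, M ℓ * w ℓ := mul_le_mul_of_nonneg_right hconstraint hwork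
  rwa [inv_pow, inv_mul_le_iff₀ (by positivity)]
end

section
/- Let L ≥ 0, let v_0, …, v_L and w_0, …, w_L be positive real numbers, let ε > 0, and set S := ∑_{k=0}^L √(v_k·w_k). Define the optimal sample numbers M_ℓ := ε^{−2} · √(v_ℓ/w_ℓ) · S for ℓ = 0, …, L. Then these M_ℓ satisfy the constraint exactly, ∑_{ℓ=0}^L v_ℓ/M_ℓ = ε², and achieve total work ∑_{ℓ=0}^L M_ℓ·w_ℓ = ε^{−2}·S², which is the minimum possible among all positive M_0, …, M_L with ∑_{ℓ=0}^L v_ℓ/M_ℓ ≤ ε². -/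
/-!
The lower bound is Cauchy–Schwarz: since `√(v w) ^ 2 = (v / M) * (M w)` for every level,
`(∑ √(v w))² ≤ (∑ v / M) (∑ M w) ≤ ε² ∑ M w` for any admissible `M`. The proposed `M` is the
equality case, `M ∝ √(v / w)`, where both `v / M` and `M w` are proportional to `√(v w)`.
-/

open Finset Real

namespace Real

lemma sqrt_div_mul_self (x : ℝ) {y : ℝ} (hy : 0 ≤ y) : √(x / y) * y = √(x * y) := by
  rw [sqrt_div' x hy, sqrt_mul' x hy]
  linear_combination √x * div_sqrt (x := y)

lemma div_sqrt_div {x : ℝ} (hx : 0 ≤ x) (y : ℝ) : x / √(x / y) = √(x * y) := by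
  rw [sqrt_div hx, sqrt_mul hx, div_div_eq_mul_div]
  linear_combination √y * div_sqrt (x := x)

end Real

section SampleAllocation

variable {ι : Type*} (s : Finset ι) {v w : ι → ℝ}

lemma sum_mul_sqrt_div_mul (c : ℝ) (hw : ∀ i ∈ s, 0 ≤ w i) :
    ∑ i ∈ s, c * √(v i / w i) * w i = c * ∑ i ∈ s, √(v i * w i) := by
  rw [mul_sum]
  exact sum_congr rfl fun i hi => by rw [mul_assoc, sqrt_div_mul_self _ (hw i hi)]

lemma sum_div_mul_sqrt_div (c : ℝ) (hv : ∀ i ∈ s, 0 ≤ v i) :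
    ∑ i ∈ s, v i / (c * √(v i / w i)) = c⁻¹ * ∑ i ∈ s, √(v i * w i) := by
  rw [mul_sum]
  exact sum_congr rfl fun i hi => by
    rw [div_mul_eq_div_div_swap, div_sqrt_div (hv i hi), div_eq_inv_mul]

lemma sq_sum_sqrt_mul_le_mul_sum_mul (hv : ∀ i ∈ s, 0 ≤ v i) (hw : ∀ i ∈ s, 0 ≤ w i)
    {m : ι → ℝ} (hm : ∀ i ∈ s, 0 < m i) {δ : ℝ} (hδ : ∑ i ∈ s, v i / m i ≤ δ) :
    (∑ i ∈ s, √(v i * w i)) ^ 2 ≤ δ * ∑ i ∈ s, m i * w i := by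
  have hwork_nonneg : 0 ≤ ∑ i ∈ s, m i * w i :=
    sum_nonneg fun i hi => mul_nonneg (hm i hi).le (hw i hi)
  calc (∑ i ∈ s, √(v i * w i)) ^ 2
      ≤ (∑ i ∈ s, v i / m i) * ∑ i ∈ s, m i * w i := by
        refine sum_sq_le_sum_mul_sum_of_sq_le_mul s
          (fun i hi => div_nonneg (hv i hi) (hm i hi).le)
          (fun i hi => mul_nonneg (hm i hi).le (hw i hi)) fun i hi => le_of_eq ?_
        rw [sq_sqrt (mul_nonneg (hv i hi) (hw i hi))]
        field_simp [(hm i hi).ne']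
    _ ≤ δ * ∑ i ∈ s, m i * w i := mul_le_mul_of_nonneg_right hδ hwork_nonneg

end SampleAllocation

theorem mlmc_optimal_samples_general
    (L : ℕ) (v w : Fin (L + 1) → ℝ)
    (hv : ∀ ℓ, 0 < v ℓ) (hw : ∀ ℓ, 0 < w ℓ)
    (ε : ℝ)
    (S : ℝ) (hS : S = ∑ k, Real.sqrt (v k * w k))
    (M : Fin (L + 1) → ℝ)
    (hMdef : ∀ ℓ, M ℓ = ε⁻¹ ^ 2 * Real.sqrt (v ℓ / w ℓ) * S) :
    (∑ ℓ, v ℓ / M ℓ = ε ^ 2) ∧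
    (∑ ℓ, M ℓ * w ℓ = ε⁻¹ ^ 2 * S ^ 2) ∧
    (∀ M' : Fin (L + 1) → ℝ, (∀ ℓ, 0 < M' ℓ) → ∑ ℓ, v ℓ / M' ℓ ≤ ε ^ 2 →
      ∑ ℓ, M ℓ * w ℓ ≤ ∑ ℓ, M' ℓ * w ℓ) := by
  have hv₀ : ∀ ℓ ∈ univ, 0 ≤ v ℓ := fun ℓ _ => (hv ℓ).le
  have hw₀ : ∀ ℓ ∈ univ, 0 ≤ w ℓ := fun ℓ _ => (hw ℓ).le
  have hS₀ : S ≠ 0 := by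
    rw [hS]
    exact (sum_pos (fun ℓ _ => sqrt_pos.2 (mul_pos (hv ℓ) (hw ℓ))) univ_nonempty).ne'
  have hM : ∀ ℓ, M ℓ = ε⁻¹ ^ 2 * S * √(v ℓ / w ℓ) := fun ℓ => by rw [hMdef]; ring
  have hwork : ∑ ℓ, M ℓ * w ℓ = ε⁻¹ ^ 2 * S ^ 2 := by
    simp only [hM]
    rw [sum_mul_sqrt_div_mul _ _ hw₀, ← hS]
    ring
  refine ⟨?_, hwork, fun M' hM' hcon => ?_⟩
  · simp only [hM]
    rw [sum_div_mul_sqrt_div _ _ hv₀, ← hS, mul_inv, inv_pow, inv_inv, mul_assoc,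
      inv_mul_cancel₀ hS₀, mul_one]
  · rw [hwork, inv_pow]
    refine inv_mul_le_of_le_mul₀ (sq_nonneg ε)
      (sum_nonneg fun ℓ _ => (mul_pos (hM' ℓ) (hw ℓ)).le) ?_
    rw [hS]
    exact sq_sum_sqrt_mul_le_mul_sum_mul _ hv₀ hw₀ (fun ℓ _ => hM' ℓ) hcon

/-- **Optimality of the multilevel Monte Carlo sample numbers.**
With `S := ∑ k, √(v k · w k)`, the sample numbers `M ℓ := ε⁻² · √(v ℓ / w ℓ) · S`
satisfy the sampling-error constraint exactly, `∑ ℓ, v ℓ / M ℓ = ε²`, achieve total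
work `∑ ℓ, M ℓ · w ℓ = ε⁻² · S²`, and this work is minimal among all positive sample
numbers satisfying `∑ ℓ, v ℓ / M ℓ ≤ ε²`. -/
theorem mlmc_optimal_samples
    (L : ℕ) (v w : Fin (L + 1) → ℝ)
    (hv : ∀ ℓ, 0 < v ℓ) (hw : ∀ ℓ, 0 < w ℓ)
    (ε : ℝ) (hε : 0 < ε)
    (S : ℝ) (hS : S = ∑ k, Real.sqrt (v k * w k))
    (M : Fin (L + 1) → ℝ)
    (hMdef : ∀ ℓ, M ℓ = ε⁻¹ ^ 2 * Real.sqrt (v ℓ / w ℓ) * S) :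
    (∑ ℓ, v ℓ / M ℓ = ε ^ 2) ∧
    (∑ ℓ, M ℓ * w ℓ = ε⁻¹ ^ 2 * S ^ 2) ∧
    (∀ M' : Fin (L + 1) → ℝ, (∀ ℓ, 0 < M' ℓ) → ∑ ℓ, v ℓ / M' ℓ ≤ ε ^ 2 →
      ∑ ℓ, M ℓ * w ℓ ≤ ∑ ℓ, M' ℓ * w ℓ) :=
  mlmc_optimal_samples_general L v w hv hw ε S hS M hMdef
end

section
/- Multilevel complexity theorem, polynomial cost case. Let η > 1, 0 < ε_0 ≤ 1, and define ε_ℓ := η^{−ℓ}·ε_0 for ℓ = 0, 1, 2, …. Let s > 0 and γ > 0 with 2s > γ, and let c_v, c_w > 0. Suppose for every L ≥ 0 the level variances and costs satisfy 0 < v_ℓ ≤ c_v·ε_ℓ^{2s} and 0 < w_ℓ ≤ c_w·ε_ℓ^{−γ} for ℓ = 0, …, L, and define the optimal sample numbers M_ℓ := ε_L^{−2}·√(v_ℓ/w_ℓ)·∑_{k=0}^L √(v_k·w_k). Then there exists a constant C > 0, depending only on η, s, γ, c_v, c_w and ε_0 but NOT on L, such that the expected total work satisfies W_tot := ∑_{ℓ=0}^L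 M_ℓ·w_ℓ ≤ C·ε_L^{−2}, while the sampling error satisfies ∑_{ℓ=0}^L v_ℓ/M_ℓ = ε_L². Consequently the total error e_tot = O(ε_L) satisfies the optimal rate e_tot = O(W_tot^{−1/2}). -/
/-!
Writing `σ = s - γ/2 > 0`, the level bounds give `√(v_ℓ w_ℓ) ≤ √(c_v c_w) ε_ℓ^σ = √(c_v c_w) ε₀^σ r^ℓ`
with `r = η^(-σ) < 1`, so `S := ∑ √(v_ℓ w_ℓ)` is bounded by a geometric series independently of `L`.
For the optimal sample numbers the total work is exactly `ε_L⁻² S²` and the sampling error exactly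
`ε_L²`, so `C = (√(c_v c_w) ε₀^σ / (1 - r))²` works.
-/

open Real Finset

lemma Real.sqrt_div_mul_self_s14 (a : ℝ) {b : ℝ} (hb : 0 ≤ b) : √(a / b) * b = √(a * b) := by
  rw [sqrt_div' a hb, div_mul_eq_mul_div, mul_div_assoc, div_sqrt, sqrt_mul' a hb]

lemma Real.div_sqrt_div_s14 {a : ℝ} (ha : 0 ≤ a) (b : ℝ) : a / √(a / b) = √(a * b) := by
  rw [sqrt_div ha, div_div_eq_mul_div, mul_div_right_comm, div_sqrt, sqrt_mul ha]

section OptimalAllocation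

variable {ι : Type*} [Fintype ι] (ε : ℝ) (v w : ι → ℝ)

noncomputable def optimalSamples (ℓ : ι) : ℝ :=
  ε⁻¹ ^ 2 * √(v ℓ / w ℓ) * ∑ k, √(v k * w k)

variable {v w}

lemma sum_sqrt_mul_pos [Nonempty ι] (hv : ∀ ℓ, 0 < v ℓ) (hw : ∀ ℓ, 0 < w ℓ) :
    0 < ∑ k, √(v k * w k) :=
  sum_pos (fun k _ => sqrt_pos.2 (mul_pos (hv k) (hw k))) univ_nonempty

lemma sum_optimalSamples_mul (hw : ∀ ℓ, 0 ≤ w ℓ) :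
    ∑ ℓ, optimalSamples ε v w ℓ * w ℓ = ε⁻¹ ^ 2 * (∑ k, √(v k * w k)) ^ 2 := by
  have hterm : ∀ ℓ, optimalSamples ε v w ℓ * w ℓ =
      ε⁻¹ ^ 2 * (∑ k, √(v k * w k)) * √(v ℓ * w ℓ) := fun ℓ => by
    rw [optimalSamples, ← sqrt_div_mul_self_s14 _ (hw ℓ)]
    ring
  rw [sum_congr rfl fun ℓ _ => hterm ℓ, ← mul_sum]
  ring

lemma sum_div_optimalSamples [Nonempty ι] (hε : ε ≠ 0) (hv : ∀ ℓ, 0 < v ℓ)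
    (hw : ∀ ℓ, 0 < w ℓ) : ∑ ℓ, v ℓ / optimalSamples ε v w ℓ = ε ^ 2 := by
  have hS := (sum_sqrt_mul_pos hv hw).ne'
  have hterm : ∀ ℓ, v ℓ / optimalSamples ε v w ℓ =
      ε ^ 2 / (∑ k, √(v k * w k)) * √(v ℓ * w ℓ) := fun ℓ => by
    rw [optimalSamples, ← div_sqrt_div_s14 (hv ℓ).le]
    field_simp
  rw [sum_congr rfl fun ℓ _ => hterm ℓ, ← mul_sum, div_mul_cancel₀ _ hS]

end OptimalAllocation

lemma sqrt_mul_le_of_le_rpow {ε v w cv cw s γ : ℝ} (hε : 0 < ε) (hcv : 0 ≤ cv)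
    (hv : v ≤ cv * ε ^ (2 * s)) (hw₀ : 0 ≤ w) (hw : w ≤ cw * ε ^ (-γ)) :
    √(v * w) ≤ √(cv * cw) * ε ^ (s - γ / 2) := by
  have hvw : v * w ≤ cv * cw * (ε ^ (s - γ / 2)) ^ 2 := by
    calc v * w ≤ cv * ε ^ (2 * s) * (cw * ε ^ (-γ)) := by gcongr
      _ = cv * cw * (ε ^ (2 * s) * ε ^ (-γ)) := by ring
      _ = cv * cw * (ε ^ (s - γ / 2)) ^ 2 := by
        rw [← rpow_add hε, ← rpow_two, ← rpow_mul hε.le]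
        ring_nf
  calc √(v * w) ≤ √(cv * cw * (ε ^ (s - γ / 2)) ^ 2) := sqrt_le_sqrt hvw
    _ = √(cv * cw) * ε ^ (s - γ / 2) := by
      rw [sqrt_mul' _ (sq_nonneg _), sqrt_sq (rpow_nonneg hε.le _)]

lemma rpow_neg_natCast_mul_rpow {η ε₀ : ℝ} (hη : 0 ≤ η) (hε₀ : 0 ≤ ε₀) (n : ℕ) (σ : ℝ) :
    (η ^ (-(n : ℝ)) * ε₀) ^ σ = ε₀ ^ σ * (η ^ (-σ)) ^ n := by
  rw [mul_rpow (rpow_nonneg hη _) hε₀, ← rpow_mul hη, ← rpow_mul_natCast hη, mul_comm]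
  ring_nf

noncomputable def mlmcWorkConstant (η ε₀ s γ cv cw : ℝ) : ℝ :=
  √(cv * cw) * ε₀ ^ (s - γ / 2) / (1 - η ^ (-(s - γ / 2)))

section WorkConstant

variable {η ε₀ s γ cv cw : ℝ} (hη : 1 < η) (hε₀ : 0 < ε₀) (h2s : γ < 2 * s)
include hη h2s

lemma rpow_neg_half_gap_lt_one : η ^ (-(s - γ / 2)) < 1 :=
  rpow_lt_one_of_one_lt_of_neg hη (by linarith)

include hε₀

lemma mlmcWorkConstant_pos (hcv : 0 < cv) (hcw : 0 < cw) :
    0 < mlmcWorkConstant η ε₀ s γ cv cw :=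
  div_pos (mul_pos (sqrt_pos.2 (mul_pos hcv hcw)) (rpow_pos_of_pos hε₀ _))
    (sub_pos.2 (rpow_neg_half_gap_lt_one hη h2s))

lemma sum_sqrt_mul_le_mlmcWorkConstant (hcv : 0 ≤ cv) {L : ℕ} {v w : Fin (L + 1) → ℝ}
    (hv : ∀ ℓ : Fin (L + 1), v ℓ ≤ cv * (η ^ (-((ℓ : ℕ) : ℝ)) * ε₀) ^ (2 * s))
    (hw : ∀ ℓ : Fin (L + 1), 0 ≤ w ℓ ∧ w ℓ ≤ cw * (η ^ (-((ℓ : ℕ) : ℝ)) * ε₀) ^ (-γ)) :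
    ∑ ℓ, √(v ℓ * w ℓ) ≤ mlmcWorkConstant η ε₀ s γ cv cw := by
  set σ := s - γ / 2
  set r := η ^ (-σ)
  have hη₀ : 0 ≤ η := by linarith
  calc ∑ ℓ : Fin (L + 1), √(v ℓ * w ℓ)
      ≤ ∑ ℓ : Fin (L + 1), √(cv * cw) * ε₀ ^ σ * r ^ (ℓ : ℕ) := by
        refine sum_le_sum fun ℓ _ => ?_
        have hεℓ : 0 < η ^ (-((ℓ : ℕ) : ℝ)) * ε₀ := by positivity
        calc √(v ℓ * w ℓ) ≤ √(cv * cw) * (η ^ (-((ℓ : ℕ) : ℝ)) * ε₀) ^ σ :=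
              sqrt_mul_le_of_le_rpow hεℓ hcv (hv ℓ) (hw ℓ).1 (hw ℓ).2
          _ = √(cv * cw) * ε₀ ^ σ * r ^ (ℓ : ℕ) := by
              rw [rpow_neg_natCast_mul_rpow hη₀ hε₀.le, mul_assoc]
    _ = √(cv * cw) * ε₀ ^ σ * ∑ i ∈ range (L + 1), r ^ i := by
        rw [← mul_sum, Fin.sum_univ_eq_sum_range (r ^ ·)]
    _ ≤ √(cv * cw) * ε₀ ^ σ * (r ^ 0 / (1 - r)) := by
        gcongr
        rw [range_eq_Ico]
        exact geom_sum_Ico_le_of_lt_one (by positivity) (rpow_neg_half_gap_lt_one hη h2s)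
    _ = mlmcWorkConstant η ε₀ s γ cv cw := by
        rw [pow_zero, mlmcWorkConstant, mul_one_div]

end WorkConstant

lemma le_sqrt_mul_rpow_neg_half {ε W C : ℝ} (hε : 0 < ε) (hW : 0 < W)
    (hWC : W ≤ C * ε⁻¹ ^ 2) : ε ≤ √C * W ^ (-(1 / 2 : ℝ)) := by
  rw [rpow_neg hW.le, ← sqrt_eq_rpow, ← div_eq_mul_inv, le_div_iff₀ (sqrt_pos.2 hW)]
  calc ε * √W = √(ε ^ 2 * W) := by rw [sqrt_mul (sq_nonneg _), sqrt_sq hε.le]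
    _ ≤ √(ε ^ 2 * (C * ε⁻¹ ^ 2)) := by gcongr
    _ = √C := by field_simp

theorem mlmc_complexity_polynomial_cost_general
    (η ε₀ s γ cv cw : ℝ)
    (hη : 1 < η) (hε₀ : 0 < ε₀)
    (h2s : γ < 2 * s) (hcv : 0 < cv) (hcw : 0 < cw) :
    ∃ C > (0 : ℝ), ∀ L : ℕ, ∀ v w : Fin (L + 1) → ℝ,
      (∀ ℓ : Fin (L + 1), 0 < v ℓ ∧
        v ℓ ≤ cv * (η ^ (-((ℓ : ℕ) : ℝ)) * ε₀) ^ (2 * s)) →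
      (∀ ℓ : Fin (L + 1), 0 < w ℓ ∧
        w ℓ ≤ cw * (η ^ (-((ℓ : ℕ) : ℝ)) * ε₀) ^ (-γ)) →
      (let εL : ℝ := η ^ (-(L : ℝ)) * ε₀
       let M : Fin (L + 1) → ℝ :=
         fun ℓ => εL⁻¹ ^ 2 * Real.sqrt (v ℓ / w ℓ) * ∑ k, Real.sqrt (v k * w k)
       (∑ ℓ, M ℓ * w ℓ ≤ C * εL⁻¹ ^ 2) ∧
       (∑ ℓ, v ℓ / M ℓ = εL ^ 2) ∧
       (εL ≤ Real.sqrt C * (∑ ℓ, M ℓ * w ℓ) ^ (-(1 / 2 : ℝ)))) := by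
  set A := mlmcWorkConstant η ε₀ s γ cv cw
  have hA : 0 < A := mlmcWorkConstant_pos hη hε₀ h2s hcv hcw
  refine ⟨A ^ 2, by positivity, fun L v w hv hw => ?_⟩
  intro εL M
  have hεL : 0 < εL := mul_pos (rpow_pos_of_pos (by linarith) _) hε₀
  have hS₀ := sum_sqrt_mul_pos (fun ℓ => (hv ℓ).1) (fun ℓ => (hw ℓ).1)
  have hSA : ∑ ℓ, √(v ℓ * w ℓ) ≤ A :=
    sum_sqrt_mul_le_mlmcWorkConstant hη hε₀ h2s hcv.le (fun ℓ => (hv ℓ).2)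
      (fun ℓ => ⟨(hw ℓ).1.le, (hw ℓ).2⟩)
  have hW : ∑ ℓ, M ℓ * w ℓ = εL⁻¹ ^ 2 * (∑ k, √(v k * w k)) ^ 2 :=
    sum_optimalSamples_mul εL fun ℓ => (hw ℓ).1.le
  have hWA : ∑ ℓ, M ℓ * w ℓ ≤ A ^ 2 * εL⁻¹ ^ 2 := by
    rw [hW, mul_comm]
    gcongr
  refine ⟨hWA, sum_div_optimalSamples εL hεL.ne' (fun ℓ => (hv ℓ).1) (fun ℓ => (hw ℓ).1), ?_⟩
  exact le_sqrt_mul_rpow_neg_half hεL (hW ▸ by positivity) hWA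

/-- **Multilevel complexity theorem, polynomial cost case.**
With level widths `ε_ℓ = η^(−ℓ)·ε₀`, level variances `v ℓ ≤ c_v·ε_ℓ^(2s)` and costs
`w ℓ ≤ c_w·ε_ℓ^(−γ)` where `2s > γ > 0`, the optimal sample numbers
`M ℓ = ε_L⁻²·√(v ℓ / w ℓ)·∑ k, √(v k · w k)` give a total work `W_tot ≤ C·ε_L⁻²`
with `C` independent of `L`, sampling error exactly `ε_L²`, and hence the optimal
rate `ε_L ≤ √C · W_tot^(−1/2)`. -/
theorem mlmc_complexity_polynomial_cost
    (η ε₀ s γ cv cw : ℝ)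
    (hη : 1 < η) (hε₀ : 0 < ε₀) (hε₀1 : ε₀ ≤ 1)
    (hs : 0 < s) (hγ : 0 < γ) (h2s : γ < 2 * s) (hcv : 0 < cv) (hcw : 0 < cw) :
    ∃ C > (0 : ℝ), ∀ L : ℕ, ∀ v w : Fin (L + 1) → ℝ,
      (∀ ℓ : Fin (L + 1), 0 < v ℓ ∧
        v ℓ ≤ cv * (η ^ (-((ℓ : ℕ) : ℝ)) * ε₀) ^ (2 * s)) →
      (∀ ℓ : Fin (L + 1), 0 < w ℓ ∧
        w ℓ ≤ cw * (η ^ (-((ℓ : ℕ) : ℝ)) * ε₀) ^ (-γ)) →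
      (let εL : ℝ := η ^ (-(L : ℝ)) * ε₀
       let M : Fin (L + 1) → ℝ :=
         fun ℓ => εL⁻¹ ^ 2 * Real.sqrt (v ℓ / w ℓ) * ∑ k, Real.sqrt (v k * w k)
       (∑ ℓ, M ℓ * w ℓ ≤ C * εL⁻¹ ^ 2) ∧
       (∑ ℓ, v ℓ / M ℓ = εL ^ 2) ∧
       (εL ≤ Real.sqrt C * (∑ ℓ, M ℓ * w ℓ) ^ (-(1 / 2 : ℝ)))) :=
  mlmc_complexity_polynomial_cost_general η ε₀ s γ cv cw hη hε₀ h2s hcv hcw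
end
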